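/- arXiv:1712.07242 — 2 statements merged into one kernel-verified Lean document; each statement's English description precedes it below -/
import Mathlib

section
/- For the half-space classifier with boundary hyperplane orthogonal to m_1 - m_2 passing through (m_1+m_2)/2, applied to a mixture α·N(m_1,Σ_1) + (1-α)·N(m_2,Σ_2), the misclassification error equals α·Q(||m_1-m_2||²/(2√((m_1-m_2)ᵀΣ_1(m_1-m_2)))) + (1-α)·Q(||m_1-m_2||²/(2√((m_1-m_2)ᵀΣ_2(m_1-m_2)))). -/
open MeasureTheory ProbabilityTheory Matrix

/-- The Gaussian tail function `Q(x) = (1/√(2π)) ∫_x^∞ e^{-u²/2} du`. -/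
noncomputable def Q (x : ℝ) : ℝ :=
  (Real.sqrt (2 * Real.pi))⁻¹ * ∫ u in Set.Ioi x, Real.exp (-u ^ 2 / 2)

/-- The square root of a positive semidefinite matrix (removed from Mathlib; old definition). -/
noncomputable def Matrix.PosSemidef.sqrt {n : Type*} [Fintype n] [DecidableEq n]
    {A : Matrix n n ℝ} (hA : A.PosSemidef) : Matrix n n ℝ :=
  (hA.1.eigenvectorUnitary : Matrix n n ℝ) * diagonal ((↑) ∘ (√·) ∘ hA.1.eigenvalues)
    * (star hA.1.eigenvectorUnitary : Matrix n n ℝ)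

/-- The multivariate Gaussian `N(m, S)` on `ℝ^p`, realized as the pushforward of the standard
Gaussian product measure under `x ↦ m + √S x`. -/
noncomputable def gaussianVec {p : ℕ} (m : Fin p → ℝ) {S : Matrix (Fin p) (Fin p) ℝ}
    (hS : S.PosSemidef) : Measure (Fin p → ℝ) :=
  (Measure.pi fun _ : Fin p => gaussianReal 0 1).map fun x => m + hS.sqrt.mulVec x

/-! The classifier only looks at the linear statistic `wᵀx` with `w = m₁ - m₂`. Under `N(m, S)`
this statistic is the real Gaussian `N(wᵀm, wᵀSw)`: the old spectral square root agrees with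
`CFC.sqrt`, so `gaussianVec m hS` is Mathlib's `multivariateGaussian`, whose images under linear
functionals are Gaussian with mean and variance read off from its mean and covariance. The threshold
`β` lies at distance `‖w‖²/2` from both `wᵀm₁` and `wᵀm₂`, and standardizing the two Gaussian
tails gives the two `Q`-terms. -/

open Set WithLp
open scoped MatrixOrder NNReal

lemma Matrix.PosSemidef.sqrt_eq_cfcSqrt {n : Type*} [Fintype n] [DecidableEq n]
    {A : Matrix n n ℝ} (hA : A.PosSemidef) : hA.sqrt = CFC.sqrt A := by
  rw [CFC.sqrt_eq_real_sqrt A hA.nonneg, cfcₙ_eq_cfc, hA.1.cfc_eq, IsHermitian.cfc,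
    Unitary.conjStarAlgAut_apply]
  -- both the coercion `(↑)` in `sqrt` and `RCLike.ofReal : ℝ → ℝ` are the identity
  rfl

lemma gaussianVec_eq_map_multivariateGaussian {p : ℕ} (m : Fin p → ℝ)
    {S : Matrix (Fin p) (Fin p) ℝ} (hS : S.PosSemidef) :
    gaussianVec m hS = (multivariateGaussian (toLp 2 m) S).map ofLp := by
  rw [gaussianVec, multivariateGaussian, ← map_pi_eq_stdGaussian,
    Measure.map_map (by fun_prop) (by fun_prop), Measure.map_map (by fun_prop) (by fun_prop),
    hS.sqrt_eq_cfcSqrt]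
  rfl

lemma multivariateGaussian_map_inner {ι : Type*} [Fintype ι] [DecidableEq ι]
    (μ w : EuclideanSpace ℝ ι) {S : Matrix ι ι ℝ} (hS : S.PosSemidef) :
    (multivariateGaussian μ S).map (fun x => inner ℝ w x)
      = gaussianReal (inner ℝ w μ) (w ⬝ᵥ S *ᵥ w).toNNReal := by
  have h := IsGaussian.map_eq_gaussianReal (μ := multivariateGaussian μ S) (innerSL ℝ w)
  rw [ContinuousLinearMap.integral_comp_id_comm IsGaussian.integrable_id,
    integral_id_multivariateGaussian] at h
  simpa [← covarianceBilin_self IsGaussian.memLp_two_id, covarianceBilin_multivariateGaussian hS]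
    using h

lemma gaussianVec_map_dotProduct {p : ℕ} (m w : Fin p → ℝ) {S : Matrix (Fin p) (Fin p) ℝ}
    (hS : S.PosSemidef) :
    (gaussianVec m hS).map (w ⬝ᵥ ·) = gaussianReal (w ⬝ᵥ m) (w ⬝ᵥ S *ᵥ w).toNNReal := by
  have h : (w ⬝ᵥ ·) ∘ ofLp = fun x : EuclideanSpace ℝ (Fin p) => inner ℝ (toLp 2 w) x := by
    ext x
    simp [EuclideanSpace.inner_eq_star_dotProduct, dotProduct_comm]
  rw [gaussianVec_eq_map_multivariateGaussian, Measure.map_map (by fun_prop) (by fun_prop), h,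
    multivariateGaussian_map_inner _ _ hS]
  simp [EuclideanSpace.inner_eq_star_dotProduct, dotProduct_comm]

lemma Q_eq_gaussianReal_Ioi (t : ℝ) : Q t = (gaussianReal 0 1 (Ioi t)).toReal := by
  rw [gaussianReal_apply_eq_integral 0 one_ne_zero,
    ENNReal.toReal_ofReal (integral_nonneg (gaussianPDFReal_nonneg 0 1)), Q,
    ← integral_const_mul]
  congr with x
  simp [gaussianPDFReal]

section StandardGaussianTail

variable {μ : ℝ} {v : ℝ≥0} (hv : v ≠ 0)
include hv

lemma gaussianReal_map_standardize :
    (gaussianReal μ v).map (fun x => (x - μ) / √v) = gaussianReal 0 1 := by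
  have hv' : (0 : ℝ) < v := by positivity
  rw [show (fun x => (x - μ) / √v) = (· / √v) ∘ (· - μ) from rfl,
    ← Measure.map_map (by fun_prop) (by fun_prop), gaussianReal_map_sub_const,
    gaussianReal_map_div_const, sub_self, zero_div]
  congr
  ext
  simp [Real.sq_sqrt hv'.le, hv'.ne']

lemma gaussianReal_Ioi_toReal (β : ℝ) :
    (gaussianReal μ v (Ioi β)).toReal = Q ((β - μ) / √v) := by
  have hv' : (0 : ℝ) < √v := by positivity
  have h : (fun x => (x - μ) / √v) ⁻¹' Ioi ((β - μ) / √v) = Ioi β := by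
    ext x
    simp [div_lt_div_iff_of_pos_right hv']
  rw [Q_eq_gaussianReal_Ioi, ← gaussianReal_map_standardize (μ := μ) hv,
    Measure.map_apply (by fun_prop) measurableSet_Ioi, h]

lemma gaussianReal_Ici_toReal (β : ℝ) :
    (gaussianReal μ v (Ici β)).toReal = Q ((β - μ) / √v) := by
  have := nullSingletonClass_gaussianReal (μ := μ) hv
  rw [← measure_congr Ioi_ae_eq_Ici, gaussianReal_Ioi_toReal hv]

lemma gaussianReal_Iio_toReal (β : ℝ) :
    (gaussianReal μ v (Iio β)).toReal = Q ((μ - β) / √v) := by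
  have h : (fun x : ℝ => -x) ⁻¹' Ioi (-β) = Iio β := by
    ext x
    simp
  rw [← h, ← Measure.map_apply (by fun_prop) measurableSet_Ioi, gaussianReal_map_neg,
    gaussianReal_Ioi_toReal hv, neg_sub_neg]

end StandardGaussianTail

section Halfspace

variable {p : ℕ} (m : Fin p → ℝ) {S : Matrix (Fin p) (Fin p) ℝ} (hS : S.PosSemidef)
  {w : Fin p → ℝ} (hv : 0 < w ⬝ᵥ S *ᵥ w)
include hv

lemma gaussianVec_dotProduct_lt_toReal (β : ℝ) :
    (gaussianVec m hS {x | w ⬝ᵥ x < β}).toReal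
      = Q ((w ⬝ᵥ m - β) / √(w ⬝ᵥ S *ᵥ w)) := by
  change (gaussianVec m hS ((w ⬝ᵥ ·) ⁻¹' Iio β)).toReal = _
  rw [← Measure.map_apply (by fun_prop) measurableSet_Iio,
    gaussianVec_map_dotProduct, gaussianReal_Iio_toReal (by simpa using hv),
    Real.coe_toNNReal _ hv.le]

lemma gaussianVec_le_dotProduct_toReal (β : ℝ) :
    (gaussianVec m hS {x | β ≤ w ⬝ᵥ x}).toReal
      = Q ((β - w ⬝ᵥ m) / √(w ⬝ᵥ S *ᵥ w)) := by
  change (gaussianVec m hS ((w ⬝ᵥ ·) ⁻¹' Ici β)).toReal = _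
  rw [← Measure.map_apply (by fun_prop) measurableSet_Ici,
    gaussianVec_map_dotProduct, gaussianReal_Ici_toReal (by simpa using hv),
    Real.coe_toNNReal _ hv.le]

end Halfspace

theorem halfspace_classifier_error_general (p : ℕ) (m₁ m₂ : Fin p → ℝ) (hm : m₁ ≠ m₂)
    (S₁ S₂ : Matrix (Fin p) (Fin p) ℝ) (h₁ : S₁.PosDef) (h₂ : S₂.PosDef)
    (α : ℝ) (β : ℝ)
    (hβ : β = ((∑ i, (m₁ i) ^ 2) - ∑ i, (m₂ i) ^ 2) / 2) :
    α * ((gaussianVec m₁ h₁.posSemidef) {x | ∑ i, (m₁ i - m₂ i) * x i < β}).toReal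
      + (1 - α) * ((gaussianVec m₂ h₂.posSemidef) {x | β ≤ ∑ i, (m₁ i - m₂ i) * x i}).toReal
    = α * Q ((∑ i, (m₁ i - m₂ i) ^ 2) /
          (2 * Real.sqrt ((fun i => m₁ i - m₂ i) ⬝ᵥ S₁.mulVec fun i => m₁ i - m₂ i)))
      + (1 - α) * Q ((∑ i, (m₁ i - m₂ i) ^ 2) /
          (2 * Real.sqrt ((fun i => m₁ i - m₂ i) ⬝ᵥ S₂.mulVec fun i => m₁ i - m₂ i))) := by
  set w : Fin p → ℝ := fun i => m₁ i - m₂ i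
  have hw : w ≠ 0 := fun h => hm (funext fun i => sub_eq_zero.mp (congrFun h i))
  have hmargin₁ : w ⬝ᵥ m₁ - β = (∑ i, (m₁ i - m₂ i) ^ 2) / 2 := by
    simp only [hβ, dotProduct, w, ← Finset.sum_sub_distrib, Finset.sum_div]
    exact Finset.sum_congr rfl fun i _ => by ring
  have hmargin₂ : β - w ⬝ᵥ m₂ = (∑ i, (m₁ i - m₂ i) ^ 2) / 2 := by
    simp only [hβ, dotProduct, w, ← Finset.sum_sub_distrib, Finset.sum_div]
    exact Finset.sum_congr rfl fun i _ => by ring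
  have hv₁ : 0 < w ⬝ᵥ S₁ *ᵥ w := by simpa using h₁.dotProduct_mulVec_pos hw
  have hv₂ : 0 < w ⬝ᵥ S₂ *ᵥ w := by simpa using h₂.dotProduct_mulVec_pos hw
  calc _ = α * Q ((w ⬝ᵥ m₁ - β) / √(w ⬝ᵥ S₁ *ᵥ w)) +
          (1 - α) * Q ((β - w ⬝ᵥ m₂) / √(w ⬝ᵥ S₂ *ᵥ w)) := by
        rw [← gaussianVec_dotProduct_lt_toReal m₁ h₁.posSemidef hv₁,
          ← gaussianVec_le_dotProduct_toReal m₂ h₂.posSemidef hv₂]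
        rfl
    _ = _ := by rw [hmargin₁, hmargin₂, div_div, div_div]

/-- The half-space classifier through `(m₁+m₂)/2` orthogonal to `m₁-m₂`, applied to the
mixture `α N(m₁,Σ₁) + (1-α) N(m₂,Σ₂)`, has misclassification error
`α Q(‖m₁-m₂‖²/(2√((m₁-m₂)ᵀΣ₁(m₁-m₂)))) + (1-α) Q(‖m₁-m₂‖²/(2√((m₁-m₂)ᵀΣ₂(m₁-m₂))))`.
The classifier labels `x` as component 1 iff `(m₁-m₂)ᵀx ≥ (‖m₁‖²-‖m₂‖²)/2`. -/
theorem halfspace_classifier_error (p : ℕ) (hp : 0 < p) (m₁ m₂ : Fin p → ℝ) (hm : m₁ ≠ m₂)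
    (S₁ S₂ : Matrix (Fin p) (Fin p) ℝ) (h₁ : S₁.PosDef) (h₂ : S₂.PosDef)
    (α : ℝ) (hα : α ∈ Set.Icc (0 : ℝ) 1) (β : ℝ)
    (hβ : β = ((∑ i, (m₁ i) ^ 2) - ∑ i, (m₂ i) ^ 2) / 2) :
    α * ((gaussianVec m₁ h₁.posSemidef) {x | ∑ i, (m₁ i - m₂ i) * x i < β}).toReal
      + (1 - α) * ((gaussianVec m₂ h₂.posSemidef) {x | β ≤ ∑ i, (m₁ i - m₂ i) * x i}).toReal
    = α * Q ((∑ i, (m₁ i - m₂ i) ^ 2) /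
          (2 * Real.sqrt ((fun i => m₁ i - m₂ i) ⬝ᵥ S₁.mulVec fun i => m₁ i - m₂ i)))
      + (1 - α) * Q ((∑ i, (m₁ i - m₂ i) ^ 2) /
          (2 * Real.sqrt ((fun i => m₁ i - m₂ i) ⬝ᵥ S₂.mulVec fun i => m₁ i - m₂ i))) :=
  halfspace_classifier_error_general p m₁ m₂ hm S₁ S₂ h₁ h₂ α β hβ
end

section
/- For a 1-dimensional mixture w·N(μ_1, σ²) + (1-w)·N(μ_2, σ²) with μ_1 ≤ μ_2, γ = (μ_2-μ_1)/(2σ) > 0, and 0 < w ≤ 0.1, the optimal Bayes classification error e_opt satisfies e_opt ≥ w·Q(γ - 1/γ). -/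
lemma gauss_integrable : MeasureTheory.Integrable (fun u : ℝ => Real.exp (-u ^ 2 / 2)) := by
  have h := integrable_exp_neg_mul_sq (b := (1/2 : ℝ)) (by norm_num)
  convert h using 2 with u
  ring_nf

lemma Q_nonneg (x : ℝ) : 0 ≤ Q x := by
  apply mul_nonneg (inv_nonneg.2 (Real.sqrt_nonneg _))
  apply MeasureTheory.setIntegral_nonneg measurableSet_Ioi
  intro u _; positivity

lemma Q_anti {x y : ℝ} (h : x ≤ y) : Q y ≤ Q x := by
  apply mul_le_mul_of_nonneg_left _ (inv_nonneg.2 (Real.sqrt_nonneg _))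
  apply MeasureTheory.setIntegral_mono_set gauss_integrable.integrableOn
  · filter_upwards with u using Real.exp_nonneg _
  · filter_upwards with u using fun hu => lt_of_le_of_lt h hu

/-- For the mixture `w N(μ₁,σ²) + (1-w) N(μ₂,σ²)` with `μ₁ ≤ μ₂`,
`γ = (μ₂-μ₁)/(2σ) > 0` and `0 < w ≤ 0.1`, the optimal Bayes error
`e_opt = w Q(γ + (1/(2γ)) ln(w/(1-w))) + (1-w) Q(γ - (1/(2γ)) ln(w/(1-w)))`
satisfies `e_opt ≥ w Q(γ - 1/γ)`. -/
theorem bayes_error_lower_bound_small_w (μ₁ μ₂ σ w γ e : ℝ) (hμ : μ₁ ≤ μ₂) (hσ : 0 < σ)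
    (hw0 : 0 < w) (hw1 : w ≤ 0.1) (hγ : γ = (μ₂ - μ₁) / (2 * σ)) (hγpos : 0 < γ)
    (he : e = w * Q (γ + 1 / (2 * γ) * Real.log (w / (1 - w)))
      + (1 - w) * Q (γ - 1 / (2 * γ) * Real.log (w / (1 - w)))) :
    w * Q (γ - 1 / γ) ≤ e := by
  have hw1' : w < 1 := by linarith
  have hlog : Real.log (w / (1 - w)) ≤ -2 := by
    have hpos : 0 < w / (1 - w) := div_pos hw0 (by linarith)
    have h9 : w / (1 - w) ≤ Real.exp (-2) := by
      have h1 : w / (1 - w) ≤ 1 / 9 := by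
        rw [div_le_div_iff₀ (by linarith) (by norm_num)]
        linarith
      have h2 : (1 : ℝ) / 9 ≤ Real.exp (-2) := by
        rw [Real.exp_neg]
        have h4 : Real.exp 2 ≤ 9 := by
          have h3 : Real.exp 1 ≤ 2.7182818286 := Real.exp_one_lt_d9.le
          have : Real.exp 2 = Real.exp 1 * Real.exp 1 := by
            rw [← Real.exp_add]; norm_num
          nlinarith [Real.exp_pos 1]
        have h5 : (Real.exp 2)⁻¹ * Real.exp 2 = 1 :=
          inv_mul_cancel₀ (Real.exp_pos 2).ne'
        nlinarith [Real.exp_pos 2]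
      linarith
    calc Real.log (w / (1 - w)) ≤ Real.log (Real.exp (-2)) :=
          Real.log_le_log hpos h9
      _ = -2 := Real.log_exp _
  have hle : γ + 1 / (2 * γ) * Real.log (w / (1 - w)) ≤ γ - 1 / γ := by
    have h1 : 1 / (2 * γ) * Real.log (w / (1 - w)) ≤ 1 / (2 * γ) * (-2) :=
      mul_le_mul_of_nonneg_left hlog (by positivity)
    have h2 : 1 / (2 * γ) * (-2) = -(1 / γ) := by field_simp
    linarith
  have hq : Q (γ - 1 / γ) ≤ Q (γ + 1 / (2 * γ) * Real.log (w / (1 - w))) := Q_anti hle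
  have h2 : 0 ≤ (1 - w) * Q (γ - 1 / (2 * γ) * Real.log (w / (1 - w))) :=
    mul_nonneg (by linarith) (Q_nonneg _)
  nlinarith [mul_le_mul_of_nonneg_left hq hw0.le]
end
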